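/- Consider the sweeping optimal control problem: minimize J[x,u] := (1/2)(x(2) − 1)² + ∫₀¹ (u(t) + 2 − t)² dt + ∫₁² (u(t) + 1)² dt over pairs (x,u), where u : [0,2] → ℝ is Lebesgue measurable, x : [0,2] → ℝ is absolutely continuous, −ẋ(t) ∈ N(x(t); (−∞, −u(t)]) for a.e. t ∈ [0,2] (in particular x(t) + u(t) ≤ 0 a.e.), and x(0) = 3/2. Define x̄(t) := 3/2 for t ∈ [0,1/2], x̄(t) := 2 − t for t ∈ [1/2,1], x̄(t) := 1 for t ∈ [1,2], and ū(t) := t − 2 for t ∈ [0,1], ū(t) := −1 for t ∈ (1,2]. Then (x̄,ū) is feasible with J[x̄,ū] = 0; moreover J[x,u] ≥ 0 for every feasible pair, and J[x,u] = 0 implies u(t) = ū(t) for a.e. t ∈ [0,2] and x(t) = x̄(t) for all t ∈ [0,2]. Hence (x̄,ū) is the unique optimal solution of the problem. -/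

import Mathlib

open Set Filter MeasureTheory Topology
open scoped RealInnerProductSpace

noncomputable section

/-- Normal cone of convex analysis: empty outside `Ω`. -/
def cNormalCone {A : Type*} [NormedAddCommGroup A] [InnerProductSpace ℝ A]
    (Ω : Set A) (z : A) : Set A :=
  {v | z ∈ Ω ∧ ∀ w ∈ Ω, ⟪v, w - z⟫ ≤ 0}

/-- Feasible triples `(x, ẋ, u)` of the controlled sweeping process
`−ẋ(t) ∈ N(x(t); (−∞,−u(t)])` a.e. on `[0,2]`, `x(0) = 3/2`, with `x` absolutely
continuous, `u` Lebesgue measurable, and finite running cost. -/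
def Feas19 (x x' u : ℝ → ℝ) : Prop :=
  Measurable u ∧
  IntervalIntegrable x' volume 0 2 ∧
  (∀ t ∈ Icc (0 : ℝ) 2, x t = x 0 + ∫ τ in (0 : ℝ)..t, x' τ) ∧
  (∀ᵐ t ∂(volume.restrict (Icc (0 : ℝ) 2)),
    -x' t ∈ cNormalCone (Iic (-u t)) (x t)) ∧
  x 0 = 3 / 2 ∧
  IntervalIntegrable (fun t => (u t + 2 - t) ^ 2) volume 0 1 ∧
  IntervalIntegrable (fun t => (u t + 1) ^ 2) volume 1 2

/-- The cost functional of the example. -/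
def J19 (x u : ℝ → ℝ) : ℝ :=
  (1 / 2) * (x 2 - 1) ^ 2 + (∫ t in (0 : ℝ)..1, (u t + 2 - t) ^ 2) +
    ∫ t in (1 : ℝ)..2, (u t + 1) ^ 2

/-- The optimal trajectory. -/
def xb19 : ℝ → ℝ := fun t => if t ≤ 1 / 2 then 3 / 2 else if t ≤ 1 then 2 - t else 1

/-- Its derivative. -/
def xb19' : ℝ → ℝ := fun t => if t ∈ Ioo (1 / 2 : ℝ) 1 then -1 else 0

/-- The optimal control. -/
def ub19 : ℝ → ℝ := fun t => if t ≤ 1 then t - 2 else -1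

/-! The cost vanishes exactly when `x 2 = 1` and `u = ub19` a.e. With the control fixed, the
sweeping process forces `x` to be nonincreasing, to stay below `-ub19 t = 2 - t` on `[0,1]`, and
to stay constant while it is strictly inside the moving set. Starting from `3/2`, a supremum
argument then keeps `x` above the barrier `min (3/2) (2 - t)`, so `x = min (3/2) (2 - t)` on
`[0,1]`; on `[1,2]` the nonincreasing `x` is squeezed between `x 1 = 1` and `x 2 = 1`. -/

theorem mem_cNormalCone_Iic_iff {a b v : ℝ} :
    v ∈ cNormalCone (Iic b) a ↔ a ≤ b ∧ 0 ≤ v ∧ (a < b → v = 0) := by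
  simp only [cNormalCone, mem_ofPred_eq, mem_Iic, Real.inner_apply]
  constructor
  · rintro ⟨hab, hv⟩
    have below := hv (a - 1) (by linarith)
    refine ⟨hab, by nlinarith, fun hlt => ?_⟩
    have at_b := hv b le_rfl
    nlinarith
  · rintro ⟨hab, hv, hlt⟩
    refine ⟨hab, fun w hw => ?_⟩
    rcases hab.lt_or_eq with h | rfl
    · simp [hlt h]
    · nlinarith

theorem le_on_Icc_of_ae_le {X Y : Type*} [TopologicalSpace X] [LinearOrder X] [OrderTopology X]
    [DenselyOrdered X] [MeasurableSpace X] {μ : Measure X} [μ.IsOpenPosMeasure]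
    [TopologicalSpace Y] [LinearOrder Y] [OrderClosedTopology Y] {f g : X → Y} {a b : X}
    (hab : a ≠ b) (hle : ∀ᵐ t ∂μ.restrict (Icc a b), f t ≤ g t)
    (hf : ContinuousOn f (Icc a b)) (hg : ContinuousOn g (Icc a b)) :
    ∀ t ∈ Icc a b, f t ≤ g t := by
  have hmin := Measure.eqOn_Icc_of_ae_eq μ hab (hle.mono fun t h => (min_eq_left h).symm) hf
    (hf.inf hg)
  exact fun t ht => min_eq_left_iff.1 (hmin ht).symm

theorem AntitoneOn.le_of_flat_below {x φ : ℝ → ℝ} {a b : ℝ} (hφ : AntitoneOn φ (Icc a b))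
    (hφc : ContinuousOn φ (Icc a b)) (hxc : ContinuousOn x (Icc a b)) (ha : φ a ≤ x a)
    (hflat : ∀ s ∈ Icc a b, ∀ t ∈ Icc a b, s ≤ t →
      (∀ τ ∈ Ioc s t, x τ < φ τ) → x t = x s) :
    ∀ t ∈ Icc a b, φ t ≤ x t := by
  intro t ht
  have hsub : Icc a t ⊆ Icc a b := Icc_subset_Icc_right ht.2
  set S := {s ∈ Icc a t | φ s ≤ x s}
  have hbdd : BddAbove S := ⟨t, fun s hs => hs.1.2⟩
  have hm : sSup S ∈ S := (isClosed_Icc.isClosed_le (hφc.mono hsub) (hxc.mono hsub)).csSup_mem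
    ⟨a, left_mem_Icc.2 ht.1, ha⟩ hbdd
  have hbelow : ∀ τ ∈ Ioc (sSup S) t, x τ < φ τ := fun τ hτ => lt_of_not_ge fun h =>
    hτ.1.not_ge (le_csSup hbdd ⟨⟨hm.1.1.trans hτ.1.le, hτ.2⟩, h⟩)
  calc φ t ≤ φ (sSup S) := hφ (hsub hm.1) ht hm.1.2
    _ ≤ x (sSup S) := hm.2
    _ = x t := (hflat _ (hsub hm.1) t ht hm.1.2 hbelow).symm

section Primitive

variable {x x' : ℝ → ℝ} {a b : ℝ}

theorem sub_eq_integral_of_primitive (hx' : IntervalIntegrable x' volume a b)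
    (hx : ∀ t ∈ Icc a b, x t = x a + ∫ τ in a..t, x' τ) {s t : ℝ} (hs : s ∈ Icc a b)
    (ht : t ∈ Icc a b) : x t - x s = ∫ τ in s..t, x' τ := by
  have from_a {c : ℝ} (hc : c ∈ Icc a b) : IntervalIntegrable x' volume a c :=
    hx'.mono_set (uIcc_subset_uIcc left_mem_uIcc (Icc_subset_uIcc hc))
  rw [hx t ht, hx s hs, ← intervalIntegral.integral_interval_sub_left (from_a ht) (from_a hs)]
  ring

theorem continuousOn_of_primitive (hx' : IntervalIntegrable x' volume a b)
    (hx : ∀ t ∈ Icc a b, x t = x a + ∫ τ in a..t, x' τ) : ContinuousOn x (Icc a b) :=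
  (continuousOn_const.add ((intervalIntegral.continuousOn_primitive_interval' hx'
    left_mem_uIcc).mono Icc_subset_uIcc)).congr hx

theorem antitoneOn_of_primitive (hx' : IntervalIntegrable x' volume a b)
    (hx : ∀ t ∈ Icc a b, x t = x a + ∫ τ in a..t, x' τ)
    (hneg : ∀ᵐ τ ∂volume.restrict (Icc a b), x' τ ≤ 0) : AntitoneOn x (Icc a b) := by
  intro s hs t ht hst
  have h := intervalIntegral.integral_nonneg_of_ae_restrict (f := fun τ => -x' τ) hst
    (ae_restrict_of_ae_restrict_of_subset (Icc_subset_Icc hs.1 ht.2)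
      (hneg.mono fun τ h => neg_nonneg.2 h))
  rw [intervalIntegral.integral_neg] at h
  linarith [sub_eq_integral_of_primitive hx' hx hs ht]

theorem eq_of_primitive_of_ae_eq_zero (hx' : IntervalIntegrable x' volume a b)
    (hx : ∀ t ∈ Icc a b, x t = x a + ∫ τ in a..t, x' τ) {s t : ℝ} (hs : s ∈ Icc a b)
    (ht : t ∈ Icc a b) (hst : s ≤ t)
    (hzero : ∀ᵐ τ ∂volume.restrict (Ioc s t), x' τ = 0) :
    x t = x s := by
  have h : ∫ τ in s..t, x' τ = 0 := by
    rw [intervalIntegral.integral_of_le hst]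
    exact integral_eq_zero_of_ae hzero
  linarith [sub_eq_integral_of_primitive hx' hx hs ht]

end Primitive

theorem intervalIntegrable_of_eqOn_zero {f : ℝ → ℝ} {μ : Measure ℝ} {a b : ℝ}
    (h : ∀ t ∈ uIoc a b, f t = 0) : IntervalIntegrable f μ a b :=
  intervalIntegrable_iff.2 (integrableOn_zero.congr_fun (fun t ht => (h t ht).symm)
    measurableSet_uIoc)

theorem ae_eq_zero_of_integral_sq_eq_zero {f : ℝ → ℝ} {a b : ℝ} (hab : a ≤ b)
    (hi : IntervalIntegrable (fun t => f t ^ 2) volume a b) (h : ∫ t in a..b, f t ^ 2 = 0) :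
    ∀ᵐ t ∂volume.restrict (Ioc a b), f t = 0 :=
  ((intervalIntegral.integral_eq_zero_iff_of_le_of_nonneg_ae hab
    (ae_of_all _ fun t => sq_nonneg (f t)) hi).1 h).mono fun _ ht =>
    (pow_eq_zero_iff two_ne_zero).1 ht

theorem J19_nonneg (x u : ℝ → ℝ) : 0 ≤ J19 x u := by
  have h₁ := intervalIntegral.integral_nonneg (μ := volume) zero_le_one fun t _ =>
    sq_nonneg (u t + 2 - t)
  have h₂ := intervalIntegral.integral_nonneg (μ := volume) one_le_two fun t _ =>
    sq_nonneg (u t + 1)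
  unfold J19
  nlinarith [sq_nonneg (x 2 - 1)]

theorem J19_eq_zero_iff (x u : ℝ → ℝ) : J19 x u = 0 ↔ x 2 = 1 ∧
    ∫ t in (0 : ℝ)..1, (u t + 2 - t) ^ 2 = 0 ∧ ∫ t in (1 : ℝ)..2, (u t + 1) ^ 2 = 0 := by
  have h₁ := intervalIntegral.integral_nonneg (μ := volume) zero_le_one fun t _ =>
    sq_nonneg (u t + 2 - t)
  have h₂ := intervalIntegral.integral_nonneg (μ := volume) one_le_two fun t _ =>
    sq_nonneg (u t + 1)
  have h₀ := sq_nonneg (x 2 - 1)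
  unfold J19
  constructor
  · intro h
    refine ⟨?_, by linarith, by linarith⟩
    nlinarith
  · rintro ⟨h₀, h₁, h₂⟩
    rw [h₀, h₁, h₂]
    norm_num

theorem xb19_eq_max_min (t : ℝ) : xb19 t = max 1 (min (3 / 2) (2 - t)) := by
  unfold xb19
  split_ifs with h₁ h₂
  · rw [min_eq_left (by linarith), max_eq_right (by norm_num)]
  · rw [min_eq_right (by linarith), max_eq_right (by linarith)]
  · rw [max_eq_left ((min_le_right _ _).trans (by linarith))]

theorem hasDerivAt_xb19 {t : ℝ} (ht : t ∉ ({1 / 2, 1} : Set ℝ)) :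
    HasDerivAt xb19 (xb19' t) t := by
  simp only [mem_insert_iff, mem_singleton_iff, not_or] at ht
  rcases lt_or_gt_of_ne ht.1 with h₁ | h₁
  · have : xb19' t = 0 := if_neg fun h => by linarith [h.1]
    rw [this]
    refine (hasDerivAt_const t (3 / 2 : ℝ)).congr_of_eventuallyEq ?_
    filter_upwards [Iio_mem_nhds h₁] with s hs using if_pos (le_of_lt hs)
  rcases lt_or_gt_of_ne ht.2 with h₂ | h₂
  · have : xb19' t = -1 := if_pos ⟨h₁, h₂⟩
    rw [this]
    refine ((hasDerivAt_id t).const_sub 2).congr_of_eventuallyEq ?_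
    filter_upwards [Ioo_mem_nhds h₁ h₂] with s hs
    dsimp only [xb19, id]
    rw [if_neg hs.1.not_ge, if_pos hs.2.le]
  · have : xb19' t = 0 := if_neg fun h => by linarith [h.2]
    rw [this]
    refine (hasDerivAt_const t (1 : ℝ)).congr_of_eventuallyEq ?_
    filter_upwards [Ioi_mem_nhds h₂] with s (hs : 1 < s)
    dsimp only [xb19]
    rw [if_neg (by linarith), if_neg hs.not_ge]

theorem intervalIntegrable_xb19' (a b : ℝ) : IntervalIntegrable xb19' volume a b := by
  have : xb19' = (Ioo (1 / 2 : ℝ) 1).indicator fun _ => -1 := by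
    ext t
    simp [xb19', indicator_apply]
  rw [this, intervalIntegrable_iff]
  exact (integrableOn_const (by simp)).indicator measurableSet_Ioo

theorem xb19_eq_add_integral {t : ℝ} (ht : t ∈ Icc (0 : ℝ) 2) :
    xb19 t = xb19 0 + ∫ τ in (0 : ℝ)..t, xb19' τ := by
  have hcont : Continuous xb19 := by
    rw [funext xb19_eq_max_min]
    fun_prop
  rw [integral_eq_of_hasDerivAt_off_countable_of_le xb19 xb19' ht.1 (by simp)
    hcont.continuousOn (fun s hs => hasDerivAt_xb19 hs.2) (intervalIntegrable_xb19' 0 t)]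
  ring

theorem ub19_of_le_one {t : ℝ} (ht : t ≤ 1) : ub19 t = t - 2 := if_pos ht

theorem ub19_of_one_lt {t : ℝ} (ht : 1 < t) : ub19 t = -1 := if_neg ht.not_ge

theorem sq_ub19_add_two_sub_eq_zero : ∀ t ∈ uIoc (0 : ℝ) 1, (ub19 t + 2 - t) ^ 2 = 0 := by
  intro t ht
  rw [uIoc_of_le zero_le_one] at ht
  rw [ub19_of_le_one ht.2]
  ring

theorem sq_ub19_add_one_eq_zero : ∀ t ∈ uIoc (1 : ℝ) 2, (ub19 t + 1) ^ 2 = 0 := by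
  intro t ht
  rw [uIoc_of_le one_le_two] at ht
  rw [ub19_of_one_lt ht.1]
  ring

theorem neg_xb19'_mem_cNormalCone (t : ℝ) :
    -xb19' t ∈ cNormalCone (Iic (-ub19 t)) (xb19 t) := by
  rw [mem_cNormalCone_Iic_iff]
  simp only [xb19, xb19', ub19, mem_Ioo]
  split_ifs <;> refine ⟨?_, ?_, ?_⟩ <;> intros <;> linarith

theorem feas19_xb19 : Feas19 xb19 xb19' ub19 :=
  ⟨Measurable.ite measurableSet_Iic (by fun_prop) (by fun_prop), intervalIntegrable_xb19' 0 2,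
    fun _ ht => xb19_eq_add_integral ht, ae_of_all _ neg_xb19'_mem_cNormalCone, by norm_num [xb19],
    intervalIntegrable_of_eqOn_zero sq_ub19_add_two_sub_eq_zero,
    intervalIntegrable_of_eqOn_zero sq_ub19_add_one_eq_zero⟩

theorem J19_xb19_ub19 : J19 xb19 ub19 = 0 :=
  (J19_eq_zero_iff _ _).2 ⟨by norm_num [xb19],
    intervalIntegral.integral_zero_ae (ae_of_all _ sq_ub19_add_two_sub_eq_zero),
    intervalIntegral.integral_zero_ae (ae_of_all _ sq_ub19_add_one_eq_zero)⟩

theorem ae_eq_ub19_of_integral_eq_zero {u : ℝ → ℝ}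
    (hi₁ : IntervalIntegrable (fun t => (u t + 2 - t) ^ 2) volume 0 1)
    (hi₂ : IntervalIntegrable (fun t => (u t + 1) ^ 2) volume 1 2)
    (h₁ : ∫ t in (0 : ℝ)..1, (u t + 2 - t) ^ 2 = 0)
    (h₂ : ∫ t in (1 : ℝ)..2, (u t + 1) ^ 2 = 0) :
    ∀ᵐ t ∂volume.restrict (Icc (0 : ℝ) 2), u t = ub19 t := by
  rw [← Measure.restrict_congr_set Ioc_ae_eq_Icc, ← Ioc_union_Ioc_eq_Ioc zero_le_one one_le_two,
    ae_restrict_union_iff]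
  constructor
  · filter_upwards [ae_eq_zero_of_integral_sq_eq_zero zero_le_one hi₁ h₁,
      ae_restrict_mem measurableSet_Ioc] with t ht htI
    rw [ub19_of_le_one htI.2]
    linarith
  · filter_upwards [ae_eq_zero_of_integral_sq_eq_zero one_le_two hi₂ h₂,
      ae_restrict_mem measurableSet_Ioc] with t ht htI
    rw [ub19_of_one_lt htI.1]
    linarith

theorem eqOn_min_of_sweeping_ub19 {x x' : ℝ → ℝ} (hx' : IntervalIntegrable x' volume 0 2)
    (hx : ∀ t ∈ Icc (0 : ℝ) 2, x t = x 0 + ∫ τ in (0 : ℝ)..t, x' τ) (hx0 : x 0 = 3 / 2)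
    (hsweep : ∀ᵐ t ∂volume.restrict (Icc (0 : ℝ) 2),
      x t ≤ -ub19 t ∧ 0 ≤ -x' t ∧ (x t < -ub19 t → -x' t = 0)) :
    ∀ t ∈ Icc (0 : ℝ) 1, x t = min (3 / 2) (2 - t) := by
  have hsub : Icc (0 : ℝ) 1 ⊆ Icc 0 2 := Icc_subset_Icc_right one_le_two
  have hcont := continuousOn_of_primitive hx' hx
  have hanti := antitoneOn_of_primitive hx' hx (hsweep.mono fun _ h => neg_nonneg.1 h.2.1)
  have upper : ∀ t ∈ Icc (0 : ℝ) 1, x t ≤ 2 - t := by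
    refine le_on_Icc_of_ae_le (μ := volume) zero_ne_one ?_ (hcont.mono hsub) (by fun_prop)
    filter_upwards [ae_restrict_of_ae_restrict_of_subset hsub hsweep,
      ae_restrict_mem measurableSet_Icc] with t h ht
    simpa [ub19_of_le_one ht.2] using h.1
  have lower : ∀ t ∈ Icc (0 : ℝ) 1, min (3 / 2) (2 - t) ≤ x t := by
    refine AntitoneOn.le_of_flat_below (fun s _ t _ hst => min_le_min_left _ (by linarith))
      (by fun_prop) (hcont.mono hsub) (by rw [hx0]; exact min_le_left _ _) ?_
    intro s hs t ht hst hlt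
    refine eq_of_primitive_of_ae_eq_zero hx' hx (hsub hs) (hsub ht) hst ?_
    filter_upwards [ae_restrict_of_ae_restrict_of_subset
      (Ioc_subset_Icc_self.trans (Icc_subset_Icc hs.1 (ht.2.trans one_le_two))) hsweep,
      ae_restrict_mem measurableSet_Ioc] with τ h hτ
    rw [ub19_of_le_one (hτ.2.trans ht.2)] at h
    exact neg_eq_zero.1 (h.2.2 (by linarith [hlt τ hτ, min_le_right (3 / 2 : ℝ) (2 - τ)]))
  exact fun t ht => le_antisymm
    (le_min (hx0 ▸ hanti ⟨le_rfl, zero_le_two⟩ (hsub ht) ht.1) (upper t ht)) (lower t ht)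

theorem eq_xb19_of_sweeping_ub19 {x x' : ℝ → ℝ} (hx' : IntervalIntegrable x' volume 0 2)
    (hx : ∀ t ∈ Icc (0 : ℝ) 2, x t = x 0 + ∫ τ in (0 : ℝ)..t, x' τ) (hx0 : x 0 = 3 / 2)
    (hx2 : x 2 = 1) (hsweep : ∀ᵐ t ∂volume.restrict (Icc (0 : ℝ) 2),
      x t ≤ -ub19 t ∧ 0 ≤ -x' t ∧ (x t < -ub19 t → -x' t = 0)) :
    ∀ t ∈ Icc (0 : ℝ) 2, x t = xb19 t := by
  have hfirst := eqOn_min_of_sweeping_ub19 hx' hx hx0 hsweep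
  intro t ht
  rw [xb19_eq_max_min]
  rcases le_total t 1 with h | h
  · rw [hfirst t ⟨ht.1, h⟩, max_eq_right (le_min (by norm_num) (by linarith))]
  · have hanti := antitoneOn_of_primitive hx' hx (hsweep.mono fun _ h => neg_nonneg.1 h.2.1)
    have hx1 : x 1 = 1 := by norm_num [hfirst 1 ⟨zero_le_one, le_rfl⟩]
    have hle := hanti ⟨zero_le_one, one_le_two⟩ ht h
    have hge := hanti ht ⟨zero_le_two, le_rfl⟩ ht.2
    rw [max_eq_left ((min_le_right _ _).trans (by linarith))]
    linarith

/-- **Unique optimal solution of the sweeping optimal control example.**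
The pair `(xb19, ub19)` is feasible with zero cost, the cost is nonnegative on all
feasible pairs, and any feasible pair of zero cost coincides with `(xb19, ub19)`
(a.e. for the control). -/
theorem sweeping_example_unique_optimal_solution :
    Feas19 xb19 xb19' ub19 ∧ J19 xb19 ub19 = 0 ∧
    (∀ x x' u : ℝ → ℝ, Feas19 x x' u → 0 ≤ J19 x u) ∧
    (∀ x x' u : ℝ → ℝ, Feas19 x x' u → J19 x u = 0 →
      (∀ᵐ t ∂(volume.restrict (Icc (0 : ℝ) 2)), u t = ub19 t) ∧
      ∀ t ∈ Icc (0 : ℝ) 2, x t = xb19 t) := by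
  refine ⟨feas19_xb19, J19_xb19_ub19, fun x _ u _ => J19_nonneg x u, ?_⟩
  rintro x x' u ⟨-, hx', hx, hcone, hx0, hi₁, hi₂⟩ hJ
  obtain ⟨hx2, h₁, h₂⟩ := (J19_eq_zero_iff x u).1 hJ
  have hu := ae_eq_ub19_of_integral_eq_zero hi₁ hi₂ h₁ h₂
  refine ⟨hu, eq_xb19_of_sweeping_ub19 hx' hx hx0 hx2 ?_⟩
  filter_upwards [hcone, hu] with t hc hut
  rwa [hut, mem_cNormalCone_Iic_iff] at hc
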